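/- arXiv:2602.21966 — 3 statements merged into one kernel-verified Lean document; each statement's English description precedes it below -/
import Mathlib

section
/- For each mechanism M ∈ {GSP, VCG} and each fixed ε > 0, the smoothed expected value 𝒱_i^ε(α) and the smoothed expected payment 𝒫_i^{M,ε}(α) of every bidder i are continuous functions of the multiplier vector α on [1,A]^n. -/
open Finset MeasureTheory

namespace SponsoredShopping

noncomputable section

/-- An item is a pair `(i, j)`: bidder `i`'s `j`-th item. -/
abbrev Item (n m : ℕ) : Type := Fin n × Fin m

/-- An allocation assigns to each rank `k` (0-based) an item. -/
abbrev Alloc (n m : ℕ) : Type := Fin (n * m) ≃ Item n m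

/-- Maximum of `f` over a finite set, with value `0` on the empty set. -/
def fmax {ι : Type*} (s : Finset ι) (f : ι → ℝ) : ℝ :=
  WithBot.unbotD 0 (s.sup fun i => (f i : WithBot ℝ))

variable {n m : ℕ}

/-- An allocation is valid under bids `b` if bids are nonincreasing along ranks. -/
def ValidUnder (b : Item n m → ℝ) (a : Alloc n m) : Prop :=
  ∀ k k' : Fin (n * m), k ≤ k' → b (a k') ≤ b (a k)

/-- The value of bidder `i` under allocation `a`
(`c k` is the CTR of slot `k`, with `c k = 0` for `k ≥ K`). -/
def bidderValue (c : ℕ → ℝ) (v : Item n m → ℝ) (a : Alloc n m) (i : Fin n) : ℝ :=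
  ∑ k : Fin (n * m), if (a k).1 = i then c k * v (a k) else 0

/-- Social welfare of an allocation. -/
def wel (c : ℕ → ℝ) (v : Item n m → ℝ) (a : Alloc n m) : ℝ :=
  ∑ k : Fin (n * m), c k * v (a k)

/-- Optimal social welfare. -/
def welOpt (c : ℕ → ℝ) (v : Item n m → ℝ) : ℝ :=
  fmax (univ : Finset (Alloc n m)) (wel c v)

/-- GSP per-click price of the item ranked `k`: highest bid among lower-ranked
items belonging to other bidders (`0` if none). -/
def gspPrice (b : Item n m → ℝ) (a : Alloc n m) (k : Fin (n * m)) : ℝ :=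
  fmax (univ.filter fun k' : Fin (n * m) => k < k' ∧ (a k').1 ≠ (a k).1)
    (fun k' => b (a k'))

/-- Total GSP payment of bidder `i`. -/
def gspPay (c : ℕ → ℝ) (b : Item n m → ℝ) (a : Alloc n m) (i : Fin n) : ℝ :=
  ∑ k : Fin (n * m), if (a k).1 = i then c k * gspPrice b a k else 0

/-- Bid-welfare of an allocation. -/
def bidWelfare (c : ℕ → ℝ) (b : Item n m → ℝ) (a : Alloc n m) : ℝ :=
  ∑ k : Fin (n * m), c k * b (a k)

/-- Bids with bidder `i`'s bids zeroed out. -/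
def exclBids (b : Item n m → ℝ) (i : Fin n) : Item n m → ℝ :=
  fun x => if x.1 = i then 0 else b x

/-- Bid-welfare obtained by bidders other than `i` in allocation `a`. -/
def othersWelfare (c : ℕ → ℝ) (b : Item n m → ℝ) (a : Alloc n m) (i : Fin n) : ℝ :=
  ∑ k : Fin (n * m), if (a k).1 ≠ i then c k * b (a k) else 0

/-- Optimal counterfactual bid-welfare without bidder `i`. -/
def woptWithout (c : ℕ → ℝ) (b : Item n m → ℝ) (i : Fin n) : ℝ :=
  fmax (univ : Finset (Alloc n m)) (fun a' => bidWelfare c (exclBids b i) a')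

/-- VCG payment of bidder `i`. -/
def vcgPay (c : ℕ → ℝ) (b : Item n m → ℝ) (a : Alloc n m) (i : Fin n) : ℝ :=
  woptWithout c b i - othersWelfare c b a i

/-- The two mechanisms considered. -/
inductive Mech | gsp | vcg

/-- Payment of bidder `i` under mechanism `M`. -/
def pay : Mech → (ℕ → ℝ) → (Item n m → ℝ) → Alloc n m → Fin n → ℝ
  | .gsp => gspPay
  | .vcg => vcgPay

/-- `S_k(a)`: the set of items assigned to the first `k` slots in `a`. -/
def topk (a : Alloc n m) (k : ℕ) : Finset (Item n m) :=
  (univ.filter fun r : Fin (n * m) => (r : ℕ) < k).image a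

/-- The (unnormalized) uniform measure on the cube `[0, ε]^{items}`. -/
def cube (n m : ℕ) (ε : ℝ) : Measure (Item n m → ℝ) :=
  Measure.pi fun _ => volume.restrict (Set.Icc (0 : ℝ) ε)

/-- Perturbed bids `b̃_{ij} = α_i v_{ij} + ξ_{ij}`. -/
def pert (α : Fin n → ℝ) (v : Item n m → ℝ) (ξ : Item n m → ℝ) : Item n m → ℝ :=
  fun x => α x.1 * v x + ξ x

/-- The rank (0-based slot) of item `x` under bids `b`: the number of items with
strictly higher bids.  When bids are tie-free this is the position of `x` in the
unique valid allocation. -/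
def rnk (b : Item n m → ℝ) (x : Item n m) : ℕ :=
  (univ.filter fun y : Item n m => b x < b y).card

/-- The value of bidder `i` under the (a.s. unique) valid allocation for bids `b`. -/
def valBid (c : ℕ → ℝ) (v : Item n m → ℝ) (b : Item n m → ℝ) (i : Fin n) : ℝ :=
  ∑ j : Fin m, c (rnk b (i, j)) * v (i, j)

/-- GSP payment of bidder `i` under the (a.s. unique) valid allocation for bids `b`. -/
def gspPayBid (c : ℕ → ℝ) (b : Item n m → ℝ) (i : Fin n) : ℝ :=
  ∑ j : Fin m, c (rnk b (i, j)) *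
    fmax (univ.filter fun y : Item n m => y.1 ≠ i ∧ b y < b (i, j)) b

/-- Bid-welfare of bidders other than `i` under the (a.s. unique) valid allocation. -/
def othersWelfareBid (c : ℕ → ℝ) (b : Item n m → ℝ) (i : Fin n) : ℝ :=
  ∑ x : Item n m, if x.1 ≠ i then c (rnk b x) * b x else 0

/-- VCG payment of bidder `i` under the (a.s. unique) valid allocation for bids `b`. -/
def vcgPayBid (c : ℕ → ℝ) (b : Item n m → ℝ) (i : Fin n) : ℝ :=
  woptWithout c b i - othersWelfareBid c b i

/-- Payment under mechanism `M` as a function of bids alone. -/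
def payBid : Mech → (ℕ → ℝ) → (Item n m → ℝ) → Fin n → ℝ
  | .gsp => gspPayBid
  | .vcg => vcgPayBid

/-- Smoothed expected value `𝒱_i^ε(α)` of bidder `i`. -/
def sVal (c : ℕ → ℝ) (v : Item n m → ℝ) (ε : ℝ) (α : Fin n → ℝ) (i : Fin n) : ℝ :=
  (ε ^ (n * m))⁻¹ * ∫ ξ, valBid c v (pert α v ξ) i ∂(cube n m ε)

/-- Smoothed expected payment `𝒫_i^{M,ε}(α)` of bidder `i`. -/
def sPay (M : Mech) (c : ℕ → ℝ) (v : Item n m → ℝ) (ε : ℝ) (α : Fin n → ℝ)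
    (i : Fin n) : ℝ :=
  (ε ^ (n * m))⁻¹ * ∫ ξ, payBid M c (pert α v ξ) i ∂(cube n m ε)

/-- The induced distribution over allocations in the smoothed game:
the probability that `a` is the realized (valid) allocation. -/
def inducedDist (v : Item n m → ℝ) (ε : ℝ) (α : Fin n → ℝ) (a : Alloc n m) : ℝ :=
  (ε ^ (n * m))⁻¹ * ((cube n m ε) {ξ | ValidUnder (pert α v ξ) a}).toReal

/-!
Once the strict order of the bids is fixed, the ranks are fixed, so the value and both payments
become continuous functions of the bids (sums and maxima of bids with fixed coefficients). Ties
lie on finitely many hyperplanes, so for every `α` the perturbed bid vector is almost surely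
tie-free, and there the integrand is continuous in `α`. Each integrand is bounded on the compact
set of bids reachable from a compact neighbourhood of `α`, and dominated convergence gives
continuity of the smoothed quantities in `α` on all of `ℝⁿ`.
-/

open Function Filter Topology

section ContinuousGivenOrder

variable {ι : Type*}

theorem isOpen_setOf_injective [Finite ι] {α : Type*} [TopologicalSpace α] [T2Space α] :
    IsOpen {b : ι → α | Injective b} := by
  have hsplit : {b : ι → α | Injective b} = ⋂ x, ⋂ y, {b | b x = b y → x = y} := by
    ext; simp [Injective]
  rw [hsplit]
  refine isOpen_iInter_of_finite fun x => isOpen_iInter_of_finite fun y => ?_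
  by_cases hxy : x = y
  · simp [hxy]
  · simpa [hxy] using isOpen_ne_fun (continuous_apply x) (continuous_apply y)

theorem eventually_lt_rel_eq_of_injective [Finite ι] {α : Type*} [LinearOrder α]
    [TopologicalSpace α] [OrderClosedTopology α] {b : ι → α} (hb : Injective b) :
    ∀ᶠ b' in 𝓝 b, (fun x y => b' x < b' y) = fun x y => b x < b y := by
  have hpair : ∀ x y, ∀ᶠ b' in 𝓝 b, (b' x < b' y ↔ b x < b y) := by
    intro x y
    rcases lt_trichotomy (b x) (b y) with h | h | h
    · exact ((continuous_apply x).continuousAt.eventually_lt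
        (continuous_apply y).continuousAt h).mono fun b' h' => iff_of_true h' h
    · obtain rfl := hb h
      exact Eventually.of_forall fun _ => iff_of_false (lt_irrefl _) (lt_irrefl _)
    · exact ((continuous_apply y).continuousAt.eventually_lt
        (continuous_apply x).continuousAt h).mono fun b' h' => iff_of_false h'.not_gt h.not_gt
  filter_upwards [eventually_all.2 fun x => eventually_all.2 (hpair x)] with b' h
  ext x y
  exact h x y

def ContinuousGivenOrder (F : (ι → ℝ) → ℝ) : Prop :=
  ∃ G : (ι → ι → Prop) → (ι → ℝ) → ℝ,
    (∀ r, Continuous (G r)) ∧ ∀ b, F b = G (fun x y => b x < b y) b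

namespace ContinuousGivenOrder

variable {F F' : (ι → ℝ) → ℝ}

theorem of_continuous (hF : Continuous F) : ContinuousGivenOrder F :=
  ⟨fun _ => F, fun _ => hF, fun _ => rfl⟩

theorem sub (hF : ContinuousGivenOrder F) (hF' : ContinuousGivenOrder F') :
    ContinuousGivenOrder (F - F') := by
  obtain ⟨G, hG, hFG⟩ := hF
  obtain ⟨G', hG', hFG'⟩ := hF'
  exact ⟨fun r => G r - G' r, fun r => (hG r).sub (hG' r), fun b => by simp [hFG, hFG']⟩

variable [Finite ι]

theorem continuousAt (hF : ContinuousGivenOrder F) {b : ι → ℝ} (hb : Injective b) :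
    ContinuousAt F b := by
  obtain ⟨G, hG, hFG⟩ := hF
  refine (hG fun x y => b x < b y).continuousAt.congr ?_
  filter_upwards [eventually_lt_rel_eq_of_injective hb] with b' h
  rw [hFG, h]

theorem exists_bound (hF : ContinuousGivenOrder F) {K : Set (ι → ℝ)} (hK : IsCompact K) :
    ∃ B, ∀ b ∈ K, ‖F b‖ ≤ B := by
  obtain ⟨G, hG, hFG⟩ := hF
  choose B hB using fun r => hK.exists_bound_of_continuousOn (hG r).continuousOn
  obtain ⟨M, hM⟩ := (Set.finite_range B).bddAbove
  exact ⟨M, fun b hb => hFG b ▸ (hB _ b hb).trans (hM (Set.mem_range_self _))⟩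

end ContinuousGivenOrder

end ContinuousGivenOrder

theorem addHaar_linearMap_preimage_singleton {E : Type*} [NormedAddCommGroup E] [NormedSpace ℝ E]
    [MeasurableSpace E] [BorelSpace E] [FiniteDimensional ℝ E] (μ : Measure E)
    [μ.IsAddHaarMeasure] {L : E →ₗ[ℝ] ℝ} (hL : L ≠ 0) (d : ℝ) : μ (L ⁻¹' {d}) = 0 := by
  obtain ⟨e, rfl⟩ := LinearMap.surjective_of_ne_zero hL d
  have hfiber : L ⁻¹' {L e} = (· + -e) ⁻¹' (LinearMap.ker L : Set E) := by
    ext ξ; simp [add_neg_eq_zero]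
  rw [hfiber, measure_preimage_add_right]
  exact Measure.addHaar_submodule μ _ (by simpa [LinearMap.ker_eq_top] using hL)

theorem ae_injective_add {ι : Type*} [Fintype ι] (w : ι → ℝ) :
    ∀ᵐ ξ ∂(volume : Measure (ι → ℝ)), Injective (w + ξ) := by
  classical
  have hpair : ∀ x y, ∀ᵐ ξ ∂(volume : Measure (ι → ℝ)), (w + ξ) x = (w + ξ) y → x = y := by
    intro x y
    by_cases hxy : x = y
    · exact Eventually.of_forall fun _ _ => hxy
    let L : (ι → ℝ) →ₗ[ℝ] ℝ :=
      LinearMap.proj (R := ℝ) (φ := fun _ : ι => ℝ) x - LinearMap.proj y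
    have hL : L ≠ 0 := fun h => by
      simpa [L, Pi.single_apply, Ne.symm hxy] using LinearMap.congr_fun h (Pi.single x 1)
    refine measure_mono_null (fun ξ h => ?_)
      (addHaar_linearMap_preimage_singleton volume hL (w y - w x))
    have htie : w x + ξ x = w y + ξ y := by simpa [hxy] using h
    simp only [Set.mem_preimage, Set.mem_singleton_iff, L, LinearMap.sub_apply,
      LinearMap.proj_apply]
    linarith
  filter_upwards [ae_all_iff.2 fun x => ae_all_iff.2 (hpair x)] with ξ h x y using h x y

theorem ContinuousGivenOrder.continuous_integral_add {ι X : Type*} [Fintype ι]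
    [TopologicalSpace X] [FirstCountableTopology X] [WeaklyLocallyCompactSpace X]
    {F : (ι → ℝ) → ℝ} (hF : ContinuousGivenOrder F) {w : X → ι → ℝ} (hw : Continuous w)
    {μ : Measure (ι → ℝ)} [IsFiniteMeasure μ] (hμ : μ ≪ volume) {Q : Set (ι → ℝ)} (hQ : IsCompact Q)
    (hμQ : ∀ᵐ ξ ∂μ, ξ ∈ Q) :
    Continuous fun t => ∫ ξ, F (w t + ξ) ∂μ := by
  have hinj : ∀ t, ∀ᵐ ξ ∂μ, Injective (w t + ξ) := fun t => hμ.ae_le (ae_injective_add (w t))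
  have hmeas : ∀ t, AEStronglyMeasurable (fun ξ => F (w t + ξ)) μ := by
    intro t
    have hopen : IsOpen {ξ : ι → ℝ | Injective (w t + ξ)} :=
      isOpen_setOf_injective.preimage (continuous_const_add (w t))
    have hcont : ContinuousOn (fun ξ => F (w t + ξ)) {ξ | Injective (w t + ξ)} := fun ξ hξ =>
      ((hF.continuousAt hξ).comp (continuous_const_add (w t)).continuousAt).continuousWithinAt
    have h := hcont.aestronglyMeasurable (μ := μ) hopen.measurableSet
    rwa [Measure.restrict_eq_self_of_ae_mem (s := {ξ | Injective (w t + ξ)}) (hinj t)] at h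
  refine continuous_iff_continuousAt.2 fun t₀ => ?_
  obtain ⟨N, hNc, hN⟩ := exists_compact_mem_nhds t₀
  obtain ⟨B, hB⟩ := hF.exists_bound ((hNc.image hw).add hQ)
  refine continuousAt_of_dominated (bound := fun _ => B) (Eventually.of_forall hmeas) ?_
    (integrable_const B) ?_
  · filter_upwards [hN] with t ht
    filter_upwards [hμQ] with ξ hξ
    exact hB _ (Set.add_mem_add (Set.mem_image_of_mem w ht) hξ)
  · filter_upwards [hinj t₀] with ξ hξ
    exact (hF.continuousAt hξ).comp (f := fun t => w t + ξ) (by fun_prop)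

theorem cube_eq_restrict (ε : ℝ) :
    cube n m ε = volume.restrict (Set.univ.pi fun _ => Set.Icc 0 ε) := by
  rw [cube, volume_pi, Measure.restrict_pi_pi]

instance isFiniteMeasure_cube (ε : ℝ) : IsFiniteMeasure (cube n m ε) := by
  rw [cube]; infer_instance

theorem continuous_integral_pert {F : (Item n m → ℝ) → ℝ} (hF : ContinuousGivenOrder F)
    (v : Item n m → ℝ) (ε : ℝ) :
    Continuous fun α : Fin n → ℝ => ∫ ξ, F (pert α v ξ) ∂cube n m ε :=
  hF.continuous_integral_add (w := fun (α : Fin n → ℝ) (x : Item n m) => α x.1 * v x)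
    (by fun_prop)
    (cube_eq_restrict ε ▸ Measure.absolutelyContinuous_of_le Measure.restrict_le_self)
    (isCompact_univ_pi fun _ => isCompact_Icc)
    (cube_eq_restrict ε ▸ ae_restrict_mem (MeasurableSet.univ_pi fun _ => measurableSet_Icc))

theorem fmax_eq_sup' {ι : Type*} {s : Finset ι} (hs : s.Nonempty) (f : ι → ℝ) :
    fmax s f = s.sup' hs f := by
  rw [fmax, ← WithBot.unbotD_coe 0 (s.sup' hs f), Finset.coe_sup' hs f]
  rfl

theorem continuous_fmax {ι X : Type*} [TopologicalSpace X] (s : Finset ι) {g : ι → X → ℝ}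
    (hg : ∀ a ∈ s, Continuous (g a)) : Continuous fun x => fmax s fun a => g a x := by
  rcases s.eq_empty_or_nonempty with rfl | hs
  · simpa [fmax] using continuous_const
  · have hsup : (fun x => fmax s fun a => g a x) = fun x => s.sup' hs fun a => g a x := by
      funext x
      exact fmax_eq_sup' hs _
    rw [hsup]
    exact Continuous.finset_sup'_apply hs hg

section Mechanisms

variable (c : ℕ → ℝ) (i : Fin n)

open Classical in
theorem continuousGivenOrder_valBid (v : Item n m → ℝ) :
    ContinuousGivenOrder fun b => valBid c v b i :=
  ⟨fun r _ => ∑ j : Fin m, c #{y | r (i, j) y} * v (i, j), fun _ => continuous_const,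
    fun b => by simp only [valBid, rnk]⟩

open Classical in
theorem continuousGivenOrder_gspPayBid :
    ContinuousGivenOrder fun b : Item n m → ℝ => gspPayBid c b i :=
  ⟨fun r b => ∑ j : Fin m, c #{y | r (i, j) y} * fmax {y | y.1 ≠ i ∧ r y (i, j)} b,
    fun _ => continuous_finsetSum _ fun j _ =>
      continuous_const.mul (continuous_fmax _ fun y _ => continuous_apply y),
    fun b => by simp only [gspPayBid, rnk]⟩

open Classical in
theorem continuousGivenOrder_othersWelfareBid :
    ContinuousGivenOrder fun b : Item n m → ℝ => othersWelfareBid c b i :=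
  ⟨fun r b => ∑ x : Item n m, if x.1 ≠ i then c #{y | r x y} * b x else 0,
    fun _ => continuous_finsetSum _ fun x _ =>
      continuous_if_const _ (fun _ => continuous_const.mul (continuous_apply x))
        fun _ => continuous_const,
    fun b => by simp only [othersWelfareBid, rnk]⟩

theorem continuous_woptWithout : Continuous fun b : Item n m → ℝ => woptWithout c b i :=
  continuous_fmax _ fun a _ => continuous_finsetSum _ fun k _ =>
    continuous_const.mul (continuous_if_const _ (fun _ => continuous_const)
      fun _ => continuous_apply (a k))

theorem continuousGivenOrder_vcgPayBid :
    ContinuousGivenOrder fun b : Item n m → ℝ => vcgPayBid c b i :=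
  (ContinuousGivenOrder.of_continuous (continuous_woptWithout c i)).sub
    (continuousGivenOrder_othersWelfareBid c i)

end Mechanisms

theorem smoothed_value_and_payment_continuousOn_general
    (n m : ℕ) (v : Item n m → ℝ) (c : ℕ → ℝ) (A : ℝ)
    (ε : ℝ) (i : Fin n) :
    ContinuousOn (fun α : Fin n → ℝ => sVal c v ε α i)
        (Set.univ.pi fun _ : Fin n => Set.Icc (1 : ℝ) A) ∧
      ∀ M : Mech,
        ContinuousOn (fun α : Fin n → ℝ => sPay M c v ε α i)
          (Set.univ.pi fun _ : Fin n => Set.Icc (1 : ℝ) A) := by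
  refine ⟨(continuous_const.mul
    (continuous_integral_pert (continuousGivenOrder_valBid c i v) v ε)).continuousOn, ?_⟩
  rintro (_ | _)
  · exact (continuous_const.mul
      (continuous_integral_pert (continuousGivenOrder_gspPayBid c i) v ε)).continuousOn
  · exact (continuous_const.mul
      (continuous_integral_pert (continuousGivenOrder_vcgPayBid c i) v ε)).continuousOn

/-- The smoothed expected value and payment of every bidder are continuous
functions of the multiplier vector on `[1, A]^n`. -/
theorem smoothed_value_and_payment_continuousOn
    (n m K : ℕ) (v : Item n m → ℝ) (c : ℕ → ℝ) (A : ℝ)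
    (hv : ∀ x : Item n m, 0 ≤ v x)
    (hvmono : ∀ (i : Fin n) (j j' : Fin m), j ≤ j' → v (i, j') ≤ v (i, j))
    (hc1 : c 0 ≤ 1) (hc0 : ∀ k, 0 ≤ c k) (hcmono : Antitone c)
    (hcK : ∀ k, K ≤ k → c k = 0)
    (hA : 1 ≤ A) (ε : ℝ) (hε : 0 < ε) (i : Fin n) :
    ContinuousOn (fun α : Fin n → ℝ => sVal c v ε α i)
        (Set.univ.pi fun _ : Fin n => Set.Icc (1 : ℝ) A) ∧
      ∀ M : Mech,
        ContinuousOn (fun α : Fin n → ℝ => sPay M c v ε α i)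
          (Set.univ.pi fun _ : Fin n => Set.Icc (1 : ℝ) A) :=
  smoothed_value_and_payment_continuousOn_general n m v c A ε i

end
end SponsoredShopping
end

section
/- If α_i = 1 for some bidder i, then under either mechanism M ∈ {GSP, VCG}, for any perturbation vector ξ ∈ [0,ε]^{nm} and any allocation a valid under the perturbed bids, bidder i's payment is at most their value plus ε·m: P_i^M(a, b̃) ≤ V_i(a) + ε·m. -/
open Finset MeasureTheory

namespace SponsoredShopping

noncomputable section

variable {n m : ℕ}

/-!
Bidder `i`'s perturbed bids are `v + ξ` with `0 ≤ ξ ≤ ε`, and click-through rates are at most `1`,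
so `i`'s bid-welfare `bidderValue c b̃ a i` exceeds its value by at most `ε` per item, `ε·m` in
total. Both payments are bounded by that bid-welfare: under GSP, validity of `a` makes every
per-click price at most the bidder's own bid; under VCG, the valid allocation `a` maximizes
bid-welfare (rearrangement inequality), so the counterfactual optimum without `i` is at most
`bidWelfare c b̃ a`, of which the others receive exactly `othersWelfare c b̃ a i`.
-/

lemma fmax_le {ι : Type*} {s : Finset ι} {f : ι → ℝ} {M : ℝ} (hM : 0 ≤ M)
    (h : ∀ x ∈ s, f x ≤ M) : fmax s f ≤ M :=
  (WithBot.unbotD_le_iff fun _ => hM).2 (Finset.sup_le fun x hx => WithBot.coe_le_coe.2 (h x hx))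

section Payments

variable {c : ℕ → ℝ} {b : Item n m → ℝ} {a : Alloc n m}

lemma sum_ite_owner_eq_mul (a : Alloc n m) (i : Fin n) (δ : ℝ) :
    (∑ k : Fin (n * m), if (a k).1 = i then δ else 0) = δ * m := by
  rw [a.sum_comp fun x : Item n m => if x.1 = i then δ else 0, Fintype.sum_prod_type,
    Finset.sum_comm]
  simp [mul_comm]

lemma bidderValue_le_add (hc1 : ∀ k, c k ≤ 1) {v : Item n m → ℝ}
    {i : Fin n} {δ : ℝ} (hb : ∀ x : Item n m, x.1 = i → v x ≤ b x ∧ b x ≤ v x + δ) :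
    bidderValue c b a i ≤ bidderValue c v a i + δ * m := by
  have hterm : ∀ k : Fin (n * m), (if (a k).1 = i then c k * b (a k) else 0) ≤
      (if (a k).1 = i then c k * v (a k) else 0) + if (a k).1 = i then δ else 0 := by
    intro k
    split_ifs with hk
    · obtain ⟨hvb, hbv⟩ := hb (a k) hk
      nlinarith [hc1 k]
    · simp
  calc bidderValue c b a i
      ≤ ∑ k : Fin (n * m), ((if (a k).1 = i then c k * v (a k) else 0) +
          if (a k).1 = i then δ else 0) := Finset.sum_le_sum fun k _ => hterm k
    _ = bidderValue c v a i + δ * m := by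
      rw [Finset.sum_add_distrib, sum_ite_owner_eq_mul]
      rfl

lemma bidWelfare_eq_othersWelfare_add_bidderValue (c : ℕ → ℝ) (b : Item n m → ℝ)
    (a : Alloc n m) (i : Fin n) :
    bidWelfare c b a = othersWelfare c b a i + bidderValue c b a i := by
  rw [othersWelfare, bidderValue, ← Finset.sum_add_distrib]
  refine Finset.sum_congr rfl fun k _ => ?_
  by_cases hk : (a k).1 = i <;> simp [hk]

lemma gspPrice_le_of_validUnder (ha : ValidUnder b a) (k : Fin (n * m)) (hb : 0 ≤ b (a k)) :
    gspPrice b a k ≤ b (a k) :=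
  fmax_le hb fun _ hk' => ha _ _ (Finset.mem_filter.1 hk').2.1.le

lemma gspPay_le_bidderValue (hc0 : ∀ k, 0 ≤ c k) {i : Fin n}
    (hb : ∀ x : Item n m, x.1 = i → 0 ≤ b x) (ha : ValidUnder b a) :
    gspPay c b a i ≤ bidderValue c b a i := by
  refine Finset.sum_le_sum fun k _ => ?_
  split_ifs with hk
  · exact mul_le_mul_of_nonneg_left (gspPrice_le_of_validUnder ha k (hb _ hk)) (hc0 k)
  · exact le_rfl

lemma bidWelfare_le_of_validUnder (hc : Antitone c) (ha : ValidUnder b a) (a' : Alloc n m) :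
    bidWelfare c b a' ≤ bidWelfare c b a := by
  have hmono : Monovary (fun k : Fin (n * m) => c k) (fun k => b (a k)) := by
    intro k j hbkj
    have hjk : j < k := lt_of_not_ge fun hkj => (ha k j hkj).not_gt hbkj
    exact hc hjk.le
  simpa [bidWelfare, smul_eq_mul] using
    hmono.sum_smul_comp_perm_le_sum_smul (σ := a'.trans a.symm)

lemma woptWithout_le_bidWelfare (hc0 : ∀ k, 0 ≤ c k) (hc : Antitone c) (hb : ∀ x, 0 ≤ b x)
    (ha : ValidUnder b a) (i : Fin n) : woptWithout c b i ≤ bidWelfare c b a := by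
  have hexcl : ∀ a' : Alloc n m, bidWelfare c (exclBids b i) a' ≤ bidWelfare c b a' :=
    fun a' => Finset.sum_le_sum fun k _ => mul_le_mul_of_nonneg_left
      (by unfold exclBids; split_ifs <;> simp [hb]) (hc0 k)
  exact fmax_le (Finset.sum_nonneg fun k _ => mul_nonneg (hc0 k) (hb _))
    fun a' _ => (hexcl a').trans (bidWelfare_le_of_validUnder hc ha a')

lemma vcgPay_le_bidderValue (hc0 : ∀ k, 0 ≤ c k) (hc : Antitone c) (hb : ∀ x, 0 ≤ b x)
    (ha : ValidUnder b a) (i : Fin n) : vcgPay c b a i ≤ bidderValue c b a i := by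
  have hwopt := woptWithout_le_bidWelfare hc0 hc hb ha i
  rw [bidWelfare_eq_othersWelfare_add_bidderValue c b a i] at hwopt
  rw [vcgPay]
  linarith

lemma pay_le_bidderValue (hc0 : ∀ k, 0 ≤ c k) (hc : Antitone c) (hb : ∀ x, 0 ≤ b x)
    (ha : ValidUnder b a) (i : Fin n) : ∀ M : Mech, pay M c b a i ≤ bidderValue c b a i
  | .gsp => gspPay_le_bidderValue hc0 (fun x _ => hb x) ha
  | .vcg => vcgPay_le_bidderValue hc0 hc hb ha i

end Payments

theorem payment_le_value_add_eps_of_multiplier_one_general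
    (n m : ℕ) (v : Item n m → ℝ) (c : ℕ → ℝ) (A : ℝ)
    (hv : ∀ x : Item n m, 0 ≤ v x)
    (hc1 : c 0 ≤ 1) (hc0 : ∀ k, 0 ≤ c k) (hcmono : Antitone c)
    (ε : ℝ)
    (α : Fin n → ℝ) (hα : ∀ i', α i' ∈ Set.Icc 1 A)
    (ξ : Item n m → ℝ) (hξ : ∀ x : Item n m, ξ x ∈ Set.Icc 0 ε)
    (i : Fin n) (hi : α i = 1)
    (a : Alloc n m) (ha : ValidUnder (pert α v ξ) a) (M : Mech) :
    pay M c (pert α v ξ) a i ≤ bidderValue c v a i + ε * m := by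
  have hb : ∀ x, 0 ≤ pert α v ξ x := fun x =>
    add_nonneg (mul_nonneg (zero_le_one.trans (hα x.1).1) (hv x)) (hξ x).1
  have hc1' : ∀ k, c k ≤ 1 := fun k => (hcmono k.zero_le).trans hc1
  have hown : ∀ x : Item n m, x.1 = i → v x ≤ pert α v ξ x ∧ pert α v ξ x ≤ v x + ε := by
    intro x hx
    simp only [pert, hx, hi, one_mul]
    exact ⟨le_add_of_nonneg_right (hξ x).1, add_le_add_right (hξ x).2 _⟩
  calc pay M c (pert α v ξ) a i ≤ bidderValue c (pert α v ξ) a i :=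
        pay_le_bidderValue hc0 hcmono hb ha i M
    _ ≤ bidderValue c v a i + ε * m := bidderValue_le_add hc1' hown

/-- A bidder with multiplier `1` pays at most their value plus `ε·m` under either
mechanism, for any perturbation in the cube and any valid allocation. -/
theorem payment_le_value_add_eps_of_multiplier_one
    (n m K : ℕ) (v : Item n m → ℝ) (c : ℕ → ℝ) (A : ℝ)
    (hv : ∀ x : Item n m, 0 ≤ v x)
    (hvmono : ∀ (i : Fin n) (j j' : Fin m), j ≤ j' → v (i, j') ≤ v (i, j))
    (hc1 : c 0 ≤ 1) (hc0 : ∀ k, 0 ≤ c k) (hcmono : Antitone c)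
    (hcK : ∀ k, K ≤ k → c k = 0)
    (hA : 1 ≤ A) (ε : ℝ) (hε : 0 ≤ ε)
    (α : Fin n → ℝ) (hα : ∀ i', α i' ∈ Set.Icc 1 A)
    (ξ : Item n m → ℝ) (hξ : ∀ x : Item n m, ξ x ∈ Set.Icc 0 ε)
    (i : Fin n) (hi : α i = 1)
    (a : Alloc n m) (ha : ValidUnder (pert α v ξ) a) (M : Mech) :
    pay M c (pert α v ξ) a i ≤ bidderValue c v a i + ε * m :=
  payment_le_value_add_eps_of_multiplier_one_general n m v c A hv hc1 hc0 hcmono ε α hα ξ hξ i hi a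
    ha M

end
end SponsoredShopping
end

section
/- Fix uniform bids b_{ij} = α_i v_{ij} with multipliers α_i ≥ 1, and fix an allocation a valid under b. Then there exists an optimal allocation a^opt with respect to the true valuations such that the GSP revenue satisfies Rev^GSP(a, b) ≥ Σ_{k=1}^{K} (c_k − c_{k+1}) · [ Σ_{(i,j) ∈ S_k(a^opt) \ S_k(a)} v_{ij} ]. -/
open Finset MeasureTheory

namespace SponsoredShopping

noncomputable section

variable {n m : ℕ}

/-!
Among the welfare-maximising allocations pick one, `aopt`, maximising `∑ k, k · rank_a (aopt k)`.
An exchange argument shows that `aopt` ranks the items of each bidder in the same order as `a`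
(within one bidder bids are proportional to values, so `a` sorts them by value).
By Abel summation the revenue is `∑ t < K, (c t - c (t+1)) · ∑ k ≤ t, p k`, with `p k` the GSP
price at rank `k`, so it suffices to bound the bids on the items in the top `s` of `aopt` but not
of `a` by the first `s` prices. Hall's theorem matches each such item `x` with a distinct item of
another bidder in the top `s` of `a`; the price of that item is at least the bid on `x`, which is
ranked below it. Hall's condition holds because displaced items of a single bidder, together with
that bidder's items in the top `s` of `a`, all lie in the top `s` of `aopt`, by the agreement of
the two orders.
-/

lemma le_fmax {ι : Type*} {s : Finset ι} (f : ι → ℝ) {i : ι} (hi : i ∈ s) : f i ≤ fmax s f := by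
  have h := le_sup (f := fun j => (f j : WithBot ℝ)) hi
  obtain ⟨y, hy⟩ := WithBot.ne_bot_iff_exists.mp (ne_bot_of_le_ne_bot WithBot.coe_ne_bot h)
  rw [← hy] at h
  simpa [fmax, ← hy] using h

lemma fmax_nonneg {ι : Type*} {s : Finset ι} {f : ι → ℝ} (h : ∀ i ∈ s, 0 ≤ f i) :
    0 ≤ fmax s f := by
  rcases s.eq_empty_or_nonempty with rfl | ⟨i, hi⟩
  · simp [fmax]
  · exact (h i hi).trans (le_fmax f hi)

lemma sum_mul_eq_sum_range_sub_mul_sum {R : Type*} [CommRing R] {N K : ℕ} {c : ℕ → R}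
    (hcK : ∀ k, K ≤ k → c k = 0) (p : Fin N → R) :
    ∑ k : Fin N, c k * p k =
      ∑ t ∈ range K, (c t - c (t + 1)) * ∑ k : Fin N with k.val < t + 1, p k := by
  have htele : ∀ k : ℕ, c k = ∑ t ∈ Ico k K, (c t - c (t + 1)) := by
    intro k
    rcases le_or_gt k K with hk | hk
    · have := sum_Ico_sub c hk
      rw [sum_sub_distrib] at this ⊢
      linear_combination this + hcK K le_rfl
    · rw [Ico_eq_empty_of_le hk.le, sum_empty, hcK k hk.le]
  calc ∑ k : Fin N, c k * p k = ∑ k : Fin N, ∑ t ∈ Ico (k : ℕ) K, (c t - c (t + 1)) * p k :=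
        sum_congr rfl fun k _ => by rw [htele k, sum_mul]
    _ = ∑ t ∈ range K, ∑ k : Fin N with k.val < t + 1, (c t - c (t + 1)) * p k :=
        sum_comm' fun k t => by
          simp only [mem_univ, mem_Ico, mem_range, mem_filter, true_and]
          omega
    _ = _ := sum_congr rfl fun t _ => (mul_sum _ _ _).symm

section Ranks

variable {a : Alloc n m} {s : ℕ} {x : Item n m}

lemma mem_topk : x ∈ topk a s ↔ (a.symm x : ℕ) < s := by
  simp only [topk, mem_image, mem_filter, mem_univ, true_and]
  exact ⟨by rintro ⟨r, hr, rfl⟩; simpa using hr, fun h => ⟨a.symm x, h, a.apply_symm_apply x⟩⟩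

lemma symm_lt_symm_of_mem_topk_of_notMem {y : Item n m} (hy : y ∈ topk a s) (hx : x ∉ topk a s) :
    a.symm y < a.symm x :=
  Fin.lt_def.mpr ((mem_topk.mp hy).trans_le (not_lt.mp (mt mem_topk.mpr hx)))

lemma card_topk (a a' : Alloc n m) (s : ℕ) : #(topk a s) = #(topk a' s) := by
  simp only [topk, card_image_of_injective _ (Equiv.injective _)]

lemma sum_topk {M : Type*} [AddCommMonoid M] (a : Alloc n m) (s : ℕ) (g : Item n m → M) :
    ∑ y ∈ topk a s, g y = ∑ k : Fin (n * m) with k.val < s, g (a k) :=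
  sum_image a.injective.injOn

end Ranks

section GSP

variable {b : Item n m → ℝ} {a : Alloc n m}

lemma le_gspPrice {k k' : Fin (n * m)} (hkk' : k < k') (hne : (a k').1 ≠ (a k).1) :
    b (a k') ≤ gspPrice b a k :=
  le_fmax (fun k' => b (a k')) (by simp [hkk', hne])

lemma gspPrice_nonneg (hb : ∀ x, 0 ≤ b x) (k : Fin (n * m)) : 0 ≤ gspPrice b a k :=
  fmax_nonneg fun _ _ => hb _

lemma sum_gspPay (c : ℕ → ℝ) : ∑ i, gspPay c b a i = ∑ k : Fin (n * m), c k * gspPrice b a k := by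
  unfold gspPay
  rw [sum_comm]
  simp

end GSP

def BidderOrderAgrees (a a' : Alloc n m) : Prop :=
  ∀ x y : Item n m, x.1 = y.1 → a.symm x < a.symm y → a'.symm x < a'.symm y

section Displaced

variable {a a' : Alloc n m} (s : ℕ)

lemma card_le_card_biUnion_of_subset_displaced (h : BidderOrderAgrees a a')
    {S : Finset (Item n m)} (hS : S ⊆ topk a' s \ topk a s) :
    #S ≤ #(S.biUnion fun x => (topk a s).filter (·.1 ≠ x.1)) := by
  by_cases hmix : ∃ x ∈ S, ∃ y ∈ S, x.1 ≠ y.1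
  · obtain ⟨x, hx, y, hy, hxy⟩ := hmix
    have hcover : topk a s ⊆ S.biUnion fun x => (topk a s).filter (·.1 ≠ x.1) := by
      intro z hz
      by_cases hzx : z.1 = x.1
      · exact mem_biUnion.mpr ⟨y, hy, mem_filter.mpr ⟨hz, hzx ▸ hxy⟩⟩
      · exact mem_biUnion.mpr ⟨x, hx, mem_filter.mpr ⟨hz, hzx⟩⟩
    calc #S ≤ #(topk a' s) := card_le_card (hS.trans sdiff_subset)
      _ = #(topk a s) := card_topk a' a s
      _ ≤ _ := card_le_card hcover
  push Not at hmix
  rcases S.eq_empty_or_nonempty with rfl | ⟨x₀, hx₀⟩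
  · simp
  set A := (topk a s).filter (·.1 = x₀.1)
  have hx₀' := mem_sdiff.mp (hS hx₀)
  have hA : A ⊆ topk a' s := by
    intro y hy
    obtain ⟨hya, hyx⟩ := mem_filter.mp hy
    have := h y x₀ hyx (symm_lt_symm_of_mem_topk_of_notMem hya hx₀'.2)
    exact mem_topk.mpr ((Fin.lt_def.mp this).trans (mem_topk.mp hx₀'.1))
  have hdisj : Disjoint S A :=
    disjoint_left.mpr fun y hy hyA => (mem_sdiff.mp (hS hy)).2 (mem_filter.mp hyA).1
  have hSA : #S + #A ≤ #(topk a s) := by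
    rw [← card_union_of_disjoint hdisj, card_topk a a']
    exact card_le_card (union_subset (hS.trans sdiff_subset) hA)
  calc #S ≤ #(topk a s) - #A := by omega
    _ = #((topk a s).filter (·.1 ≠ x₀.1)) := by
      rw [filter_not, card_sdiff_of_subset (filter_subset _ _)]
    _ ≤ _ := card_le_card (subset_biUnion_of_mem (fun x => (topk a s).filter (·.1 ≠ x.1)) hx₀)

lemma exists_injective_displaced_to_topk_other_bidder (h : BidderOrderAgrees a a') :
    ∃ f : ↥(topk a' s \ topk a s) → Item n m, Function.Injective f ∧
      ∀ x, f x ∈ topk a s ∧ (f x).1 ≠ x.1.1 := by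
  classical
  obtain ⟨f, hf, hft⟩ := (all_card_le_biUnion_card_iff_exists_injective
    fun x : ↥(topk a' s \ topk a s) => (topk a s).filter (·.1 ≠ x.1.1)).mp
      fun (S : Finset ↥(topk a' s \ topk a s)) => by
        have := card_le_card_biUnion_of_subset_displaced s h (S := S.image Subtype.val)
          fun _ hx => by obtain ⟨y, -, rfl⟩ := mem_image.mp hx; exact y.2
        rwa [card_image_of_injective _ Subtype.val_injective, image_biUnion] at this
  exact ⟨f, hf, fun x => mem_filter.mp (hft x)⟩

lemma sum_displaced_le_sum_gspPrice {b : Item n m → ℝ} (hb : ∀ x, 0 ≤ b x)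
    (h : BidderOrderAgrees a a') :
    ∑ x ∈ topk a' s \ topk a s, b x ≤ ∑ k : Fin (n * m) with k.val < s, gspPrice b a k := by
  obtain ⟨f, hf, hft⟩ := exists_injective_displaced_to_topk_other_bidder s h
  have hprice : ∀ x, b x.1 ≤ gspPrice b a (a.symm (f x)) := by
    intro x
    have hlt := symm_lt_symm_of_mem_topk_of_notMem (hft x).1 (mem_sdiff.mp x.2).2
    simpa using le_gspPrice (b := b) (a := a) hlt (by simpa using Ne.symm (hft x).2)
  calc ∑ x ∈ topk a' s \ topk a s, b x = ∑ x : ↥(topk a' s \ topk a s), b x :=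
        (sum_coe_sort _ _).symm
    _ ≤ ∑ x : ↥(topk a' s \ topk a s), gspPrice b a (a.symm (f x)) :=
        sum_le_sum fun x _ => hprice x
    _ = ∑ y ∈ univ.image f, gspPrice b a (a.symm y) :=
        (sum_image (f := fun y => gspPrice b a (a.symm y)) hf.injOn).symm
    _ ≤ ∑ y ∈ topk a s, gspPrice b a (a.symm y) :=
        sum_le_sum_of_subset_of_nonneg
          (fun y hy => by obtain ⟨x, -, rfl⟩ := mem_image.mp hy; exact (hft x).1)
          fun _ _ _ => gspPrice_nonneg hb _
    _ = ∑ k : Fin (n * m) with k.val < s, gspPrice b a k := by simp [sum_topk]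

end Displaced

lemma sum_comp_swap_sub {ι X M : Type*} [Fintype ι] [DecidableEq ι] [AddCommGroup M]
    (e : ι → X) (g : ι → X → M) (k k' : ι) :
    ∑ r, g r (e (Equiv.swap k k' r)) - ∑ r, g r (e r)
      = g k (e k') + g k' (e k) - (g k (e k) + g k' (e k')) := by
  by_cases hk : k = k'
  · subst hk; simp
  have hk' : k' ∈ univ.erase k := mem_erase.mpr ⟨Ne.symm hk, mem_univ _⟩
  rw [← add_sum_erase _ _ (mem_univ k), ← add_sum_erase _ _ hk',
    ← add_sum_erase _ (fun r => g r (e r)) (mem_univ k), ← add_sum_erase _ _ hk',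
    sum_congr rfl fun r hr => by
      rw [Equiv.swap_apply_of_ne_of_ne (ne_of_mem_erase (mem_of_mem_erase hr))
        (ne_of_mem_erase hr)]]
  simp only [Equiv.swap_apply_left, Equiv.swap_apply_right]
  abel

lemma ValidUnder.value_antitone_of_same_bidder {α : Fin n → ℝ} {v : Item n m → ℝ}
    {a : Alloc n m} (ha : ValidUnder (fun x => α x.1 * v x) a) (hα : ∀ i, 0 < α i)
    {x y : Item n m} (hxy : x.1 = y.1) (hlt : a.symm x < a.symm y) : v y ≤ v x := by
  have := ha _ _ hlt.le
  simp only [Equiv.apply_symm_apply, hxy] at this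
  exact le_of_mul_le_mul_left this (hα _)

lemma exists_optimal_bidderOrderAgrees {c : ℕ → ℝ} (hc : Antitone c) {v : Item n m → ℝ}
    {a : Alloc n m} (hav : ∀ x y : Item n m, x.1 = y.1 → a.symm x < a.symm y → v y ≤ v x) :
    ∃ aopt : Alloc n m, (∀ a', wel c v a' ≤ wel c v aopt) ∧ BidderOrderAgrees a aopt := by
  classical
  obtain ⟨a₀, -, ha₀⟩ := exists_max_image univ (wel c v) ⟨a, mem_univ _⟩
  let Φ : Alloc n m → ℤ := fun a' => ∑ r : Fin (n * m), (r : ℤ) * (a.symm (a' r) : ℤ)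
  obtain ⟨aopt, hoptT, hmax⟩ := exists_max_image
    (univ.filter fun a' => ∀ a'', wel c v a'' ≤ wel c v a') Φ
    ⟨a₀, mem_filter.mpr ⟨mem_univ _, fun a'' => ha₀ a'' (mem_univ _)⟩⟩
  have hopt := (mem_filter.mp hoptT).2
  refine ⟨aopt, hopt, fun x y hxy hlt => ?_⟩
  by_contra hge
  have hne : x ≠ y := by rintro rfl; exact lt_irrefl _ hlt
  have hkk' : aopt.symm y < aopt.symm x :=
    lt_of_le_of_ne (not_lt.mp hge) (aopt.symm.injective.ne hne.symm)
  set k := aopt.symm y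
  set k' := aopt.symm x
  let a₂ : Alloc n m := (Equiv.swap k k').trans aopt
  have hwel : wel c v aopt ≤ wel c v a₂ := by
    have hswap := sum_comp_swap_sub aopt (fun r x => c r * v x) k k'
    have hgain : 0 ≤ (c k - c k') * (v x - v y) :=
      mul_nonneg (sub_nonneg.mpr (hc (Fin.lt_def.mp hkk').le))
        (sub_nonneg.mpr (hav x y hxy hlt))
    simp only [k, k', Equiv.apply_symm_apply] at hswap hgain
    simp only [wel, a₂, Equiv.trans_apply]
    linarith
  have hΦ : Φ aopt < Φ a₂ := by
    have hswap := sum_comp_swap_sub aopt (fun r x => (r : ℤ) * (a.symm x : ℤ)) k k'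
    have hgain : 0 < ((k' : ℤ) - k) * ((a.symm y : ℤ) - a.symm x) :=
      mul_pos (by simpa using Fin.lt_def.mp hkk') (by simpa using Fin.lt_def.mp hlt)
    simp only [k, k', Equiv.apply_symm_apply] at hswap hgain
    simp only [Φ, a₂, Equiv.trans_apply]
    linarith
  exact hΦ.not_ge (hmax a₂ (mem_filter.mpr ⟨mem_univ _, fun a'' => (hopt a'').trans hwel⟩))

theorem gsp_revenue_covers_displaced_value_general
    (n m K : ℕ) (v : Item n m → ℝ) (c : ℕ → ℝ)
    (hv : ∀ x : Item n m, 0 ≤ v x)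
    (hcmono : Antitone c)
    (hcK : ∀ k, K ≤ k → c k = 0)
    (α : Fin n → ℝ) (hα : ∀ i, 1 ≤ α i)
    (a : Alloc n m) (ha : ValidUnder (fun x => α x.1 * v x) a) :
    ∃ aopt : Alloc n m,
      (∀ a' : Alloc n m, wel c v a' ≤ wel c v aopt) ∧
      ∑ t ∈ Finset.range K, (c t - c (t + 1)) *
          ∑ x ∈ topk aopt (t + 1) \ topk a (t + 1), v x
        ≤ ∑ i : Fin n, gspPay c (fun x => α x.1 * v x) a i := by
  have hvb : ∀ x, v x ≤ α x.1 * v x := fun x => le_mul_of_one_le_left (hv x) (hα _)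
  obtain ⟨aopt, hopt, hagree⟩ := exists_optimal_bidderOrderAgrees hcmono
    fun x y => ha.value_antitone_of_same_bidder fun i => one_pos.trans_le (hα i)
  refine ⟨aopt, hopt, ?_⟩
  rw [sum_gspPay, sum_mul_eq_sum_range_sub_mul_sum hcK]
  gcongr with t
  · exact sub_nonneg.mpr (hcmono t.le_succ)
  · exact (sum_le_sum fun x _ => hvb x).trans
      (sum_displaced_le_sum_gspPrice (t + 1) (fun x => (hv x).trans (hvb x)) hagree)

/-- Revenue lemma for GSP: there is an optimal allocation whose displaced items'
layered value is covered by the revenue. -/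
theorem gsp_revenue_covers_displaced_value
    (n m K : ℕ) (v : Item n m → ℝ) (c : ℕ → ℝ)
    (hv : ∀ x : Item n m, 0 ≤ v x)
    (hvmono : ∀ (i : Fin n) (j j' : Fin m), j ≤ j' → v (i, j') ≤ v (i, j))
    (hc1 : c 0 ≤ 1) (hc0 : ∀ k, 0 ≤ c k) (hcmono : Antitone c)
    (hcK : ∀ k, K ≤ k → c k = 0)
    (α : Fin n → ℝ) (hα : ∀ i, 1 ≤ α i)
    (a : Alloc n m) (ha : ValidUnder (fun x => α x.1 * v x) a) :
    ∃ aopt : Alloc n m,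
      (∀ a' : Alloc n m, wel c v a' ≤ wel c v aopt) ∧
      ∑ t ∈ Finset.range K, (c t - c (t + 1)) *
          ∑ x ∈ topk aopt (t + 1) \ topk a (t + 1), v x
        ≤ ∑ i : Fin n, gspPay c (fun x => α x.1 * v x) a i :=
  gsp_revenue_covers_displaced_value_general n m K v c hv hcmono hcK α hα a ha

end
end SponsoredShopping
end
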